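/- arXiv:0912.4164 — 9 statements merged into one kernel-verified Lean document; each statement's English description precedes it below -/
import Mathlib

section
/- Let (M, dist) be a proper geodesic metric space and let P and Q be two disjoint, nonempty, closed subsets of M. Then for every integer k ≥ 2 there exists at least one distance k-sector of P and Q, i.e., a (k−1)-tuple (C_1, …, C_{k−1}) of nonempty subsets of M such that C_i = bisect(C_{i−1}, C_{i+1}) for every i = 1, …, k−1, where C_0 = P and C_k = Q. -/
open Metric Set

/-!
Look for the sector as `C i = U i ∩ V i`, where `U 0 = P`, `V k = Q` and, for `0 < i < k`,
`U i` (resp. `V i`) is the set of points at least as close to `U (i - 1)` as to `V (i + 1)`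
(resp. the reverse). These equations say that `(U, V)` is a fixed point of a map that is
monotone when the `U`'s are ordered by inclusion and the `V`'s by reverse inclusion, so
Knaster–Tarski provides a solution. Then `U i ∪ V i` is the whole space, `U` increases, `V`
decreases, and `P ∩ Q = ∅` propagates to `U i ∩ V (i + 1) = ∅`.

In a geodesic space a segment from a point of `U i` to a point of `V i` crosses `U i ∩ V i`.
With nearest points (properness) this gives `dist(z, C (i - 1)) = dist(z, U (i - 1))` for
`z ∈ V (i - 1)`, so points of `C i` are on the bisector; and a point outside `U i` (resp. `V i`)
is strictly closer to `C (i + 1)` than to `C (i - 1)` (resp. the reverse), so the bisector lies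
in `C i`.
-/

/-- The bisector of two sets: points equidistant from `X` and `Y`. -/
def bisect {M : Type*} [MetricSpace M] (X Y : Set M) : Set M :=
  {z | infDist z X = infDist z Y}

/-- A metric space is geodesic if any two distinct points are joined by a metric
segment, i.e. an isometric image of a real interval. -/
def IsGeodesicSpace (M : Type*) [MetricSpace M] : Prop :=
  ∀ x y : M, x ≠ y → ∃ (a b : ℝ) (γ : ℝ → M), a ≤ b ∧ γ a = x ∧ γ b = y ∧
    ∀ s ∈ Set.Icc a b, ∀ t ∈ Set.Icc a b, dist (γ s) (γ t) = |s - t|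

section Dominance

variable {α : Type*} [PseudoEMetricSpace α] {X X' Y Y' : Set α} {z : α}

/-- Extended distances make this monotone in `X` and antitone in `Y` also at empty sets, where
`infDist` takes the junk value `0`. -/
def dominanceRegion (X Y : Set α) : Set α :=
  {z | infEDist z X ≤ infEDist z Y}

theorem dominanceRegion_mono (hX : X ⊆ X') (hY : Y' ⊆ Y) :
    dominanceRegion X Y ⊆ dominanceRegion X' Y' :=
  fun _ hz => (infEDist_anti hX).trans (hz.trans (infEDist_anti hY))

theorem subset_dominanceRegion : X ⊆ dominanceRegion X Y :=
  fun _ hz => (infEDist_zero_of_mem hz).trans_le bot_le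

theorem dominanceRegion_union_dominanceRegion :
    dominanceRegion X Y ∪ dominanceRegion Y X = univ :=
  eq_univ_of_forall fun z => le_total (infEDist z X) (infEDist z Y)

theorem isClosed_dominanceRegion : IsClosed (dominanceRegion X Y) :=
  isClosed_le continuous_infEDist continuous_infEDist

theorem mem_of_mem_dominanceRegion (hX : IsClosed X) (hz : z ∈ dominanceRegion X Y)
    (hzY : z ∈ Y) : z ∈ X := by
  rw [← hX.closure_eq, mem_closure_iff_infEDist_zero]
  exact le_antisymm (hz.trans (infEDist_zero_of_mem hzY).le) bot_le

end Dominance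

theorem mem_dominanceRegion_iff {α : Type*} [PseudoMetricSpace α] {X Y : Set α} {z : α}
    (hX : X.Nonempty) (hY : Y.Nonempty) :
    z ∈ dominanceRegion X Y ↔ infDist z X ≤ infDist z Y :=
  (ENNReal.toReal_le_toReal (infEDist_ne_top hX) (infEDist_ne_top hY)).symm

structure IsDominanceChain {α : Type*} [PseudoEMetricSpace α] (k : ℕ) (P Q : Set α)
    (U V : ℕ → Set α) : Prop where
  left_zero : U 0 = P
  right_zero : V 0 = univ
  left_of_le : ∀ i, k ≤ i → U i = univ
  right_of_le : ∀ i, k ≤ i → V i = Q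
  left_succ : ∀ i, i + 1 < k → U (i + 1) = dominanceRegion (U i) (V (i + 2))
  right_succ : ∀ i, i + 1 < k → V (i + 1) = dominanceRegion (V (i + 2)) (U i)

theorem exists_isDominanceChain {α : Type*} [PseudoEMetricSpace α] {k : ℕ} (hk : 0 < k)
    (P Q : Set α) : ∃ U V, IsDominanceChain k P Q U V := by
  let left (U V : ℕ → Set α) (i : ℕ) : Set α :=
    if i = 0 then P else if i < k then dominanceRegion (U (i - 1)) (V (i + 1)) else univ
  let right (U V : ℕ → Set α) (i : ℕ) : Set α :=
    if i = 0 then univ else if i < k then dominanceRegion (V (i + 1)) (U (i - 1)) else Q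
  let F : (ℕ → Set α) × (ℕ → Set α)ᵒᵈ →o (ℕ → Set α) × (ℕ → Set α)ᵒᵈ :=
    { toFun := fun UV => (left UV.1 UV.2.ofDual, .toDual (right UV.1 UV.2.ofDual))
      monotone' := by
        rintro ⟨U, V⟩ ⟨U', V'⟩ ⟨hU, hV : ∀ i, V' i ⊆ V i⟩
        refine ⟨fun i => ?_, fun i => (?_ : right U' V' i ⊆ right U V i)⟩ <;>
          dsimp only [left, right] <;> split_ifs
        exacts [le_rfl, dominanceRegion_mono (hU _) (hV _), le_rfl,
          le_rfl, dominanceRegion_mono (hV _) (hU _), le_rfl] }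
  obtain ⟨⟨U, V⟩, hfix⟩ : ∃ UV, F UV = UV := ⟨_, F.map_lfp⟩
  have hU (i : ℕ) : left U V.ofDual i = U i := congrFun (congrArg Prod.fst hfix) i
  have hV (i : ℕ) : right U V.ofDual i = V.ofDual i :=
    congrFun (congrArg (fun UV => UV.2.ofDual) hfix) i
  refine ⟨U, V.ofDual, ⟨?_, ?_, fun i hi => ?_, fun i hi => ?_, fun i hi => ?_, fun i hi => ?_⟩⟩
  · simpa [left] using (hU 0).symm
  · simpa [right] using (hV 0).symm
  · simpa [left, show i ≠ 0 by omega, show ¬ i < k by omega] using (hU i).symm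
  · simpa [right, show i ≠ 0 by omega, show ¬ i < k by omega] using (hV i).symm
  · simpa [left, hi] using (hU (i + 1)).symm
  · simpa [right, hi] using (hV (i + 1)).symm

namespace IsDominanceChain

variable {α : Type*} [PseudoEMetricSpace α] {k : ℕ} {P Q : Set α} {U V : ℕ → Set α}
  (h : IsDominanceChain k P Q U V)
include h

theorem monotone : Monotone U := by
  refine monotone_nat_of_le_succ fun i => ?_
  rcases lt_or_ge (i + 1) k with hi | hi
  · exact (h.left_succ i hi).symm ▸ subset_dominanceRegion
  · exact (h.left_of_le _ hi).symm ▸ subset_univ _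

theorem antitone : Antitone V := by
  refine antitone_nat_of_succ_le fun i => ?_
  rcases i with _ | i
  · exact h.right_zero.symm ▸ subset_univ _
  rcases lt_or_ge (i + 1) k with hi | hi
  · exact (h.right_succ i hi).symm ▸ subset_dominanceRegion
  · rw [h.right_of_le _ hi, h.right_of_le _ (by omega)]

theorem subset_left (i : ℕ) : P ⊆ U i :=
  h.left_zero ▸ h.monotone i.zero_le

theorem subset_right (i : ℕ) : Q ⊆ V i :=
  h.right_of_le (max i k) (le_max_right i k) ▸ h.antitone (le_max_left i k)

theorem isClosed_left (hP : IsClosed P) (i : ℕ) : IsClosed (U i) := by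
  rcases i with _ | i
  · exact h.left_zero ▸ hP
  rcases lt_or_ge (i + 1) k with hi | hi
  · exact h.left_succ i hi ▸ isClosed_dominanceRegion
  · exact h.left_of_le _ hi ▸ isClosed_univ

theorem isClosed_right (hQ : IsClosed Q) (i : ℕ) : IsClosed (V i) := by
  rcases i with _ | i
  · exact h.right_zero ▸ isClosed_univ
  rcases lt_or_ge (i + 1) k with hi | hi
  · exact h.right_succ i hi ▸ isClosed_dominanceRegion
  · exact h.right_of_le _ hi ▸ hQ

theorem left_union_right (i : ℕ) : U i ∪ V i = univ := by
  rcases i with _ | i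
  · rw [h.right_zero, union_univ]
  rcases lt_or_ge (i + 1) k with hi | hi
  · rw [h.left_succ i hi, h.right_succ i hi, dominanceRegion_union_dominanceRegion]
  · rw [h.left_of_le _ hi, univ_union]

theorem left_inter_right_succ_subset (hP : IsClosed P) {i : ℕ} (hi : i < k) :
    U i ∩ V (i + 1) ⊆ P := by
  induction i with
  | zero => exact h.left_zero ▸ inter_subset_left
  | succ i ih =>
    rintro z ⟨hzU, hzV⟩
    rw [h.left_succ i hi] at hzU
    exact ih (by omega) ⟨mem_of_mem_dominanceRegion (h.isClosed_left hP i) hzU hzV,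
      h.antitone (Nat.le_succ _) hzV⟩

theorem inter_right_subset (hQ : IsClosed Q) {i : ℕ} (hi : 0 < i) : P ∩ V i ⊆ Q := by
  rintro z ⟨hzP, hzV⟩
  induction hd : k - i generalizing i with
  | zero => exact h.right_of_le i (by omega) ▸ hzV
  | succ d ih =>
    obtain ⟨j, rfl⟩ : ∃ j, i = j + 1 := ⟨i - 1, by omega⟩
    rw [h.right_succ j (by omega)] at hzV
    exact ih (by omega)
      (mem_of_mem_dominanceRegion (h.isClosed_right hQ _) hzV (h.subset_left j hzP)) (by omega)

theorem disjoint_left_right_succ (hP : IsClosed P) (hQ : IsClosed Q) (hPQ : Disjoint P Q)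
    {i : ℕ} (hi : i < k) : Disjoint (U i) (V (i + 1)) :=
  disjoint_left.mpr fun _ hzU hzV =>
    have hzP := h.left_inter_right_succ_subset hP hi ⟨hzU, hzV⟩
    disjoint_left.mp hPQ hzP (h.inter_right_subset hQ i.succ_pos ⟨hzP, hzV⟩)

end IsDominanceChain

namespace IsGeodesicSpace

variable {M : Type*} [MetricSpace M] (hgeo : IsGeodesicSpace M)
include hgeo

theorem exists_isPreconnected_segment (x y : M) :
    ∃ S : Set M, IsPreconnected S ∧ x ∈ S ∧ y ∈ S ∧ ∀ w ∈ S, dist x w + dist w y = dist x y := by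
  rcases eq_or_ne x y with rfl | hxy
  · exact ⟨{x}, isPreconnected_singleton, rfl, rfl, by simp⟩
  obtain ⟨a, b, γ, hab, rfl, rfl, hγ⟩ := hgeo x y hxy
  have hγc : ContinuousOn γ (Icc a b) :=
    (LipschitzOnWith.of_dist_le_mul fun s hs t ht => by
      rw [hγ s hs t ht, NNReal.coe_one, one_mul, Real.dist_eq]).continuousOn
  have ha : a ∈ Icc a b := ⟨le_rfl, hab⟩
  have hb : b ∈ Icc a b := ⟨hab, le_rfl⟩
  refine ⟨γ '' Icc a b, isPreconnected_Icc.image γ hγc, mem_image_of_mem γ ha,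
    mem_image_of_mem γ hb, ?_⟩
  rintro _ ⟨t, ht, rfl⟩
  rw [hγ a ha t ht, hγ t ht b hb, hγ a ha b hb, abs_of_nonpos (by linarith [ht.1]),
    abs_of_nonpos (by linarith [ht.2]), abs_of_nonpos (by linarith)]
  ring

theorem exists_mem_inter_dist_add_dist_eq {A W : Set M} (hA : IsClosed A) (hW : IsClosed W)
    (hAW : A ∪ W = univ) {x y : M} (hx : x ∈ A) (hy : y ∈ W) :
    ∃ w ∈ A ∩ W, dist x w + dist w y = dist x y := by
  obtain ⟨S, hS, hxS, hyS, hSxy⟩ := hgeo.exists_isPreconnected_segment x y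
  obtain ⟨w, hwS, hw⟩ := isPreconnected_closed_iff.mp hS A W hA hW (hAW ▸ subset_univ S)
    ⟨x, hxS, hx⟩ ⟨y, hyS, hy⟩
  exact ⟨w, hw, hSxy w hwS⟩

variable [ProperSpace M] {A W E : Set M} {z : M}

theorem infDist_inter_eq (hA : IsClosed A) (hAne : A.Nonempty) (hW : IsClosed W)
    (hAW : A ∪ W = univ) (hz : z ∈ W) : infDist z (A ∩ W) = infDist z A := by
  obtain ⟨u, huA, hu⟩ := hA.exists_infDist_eq_dist hAne z
  obtain ⟨w, ⟨hwW, hwA⟩, hw⟩ :=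
    hgeo.exists_mem_inter_dist_add_dist_eq hW hA (union_comm A W ▸ hAW) hz huA
  refine le_antisymm ?_ (infDist_le_infDist_of_subset inter_subset_left ⟨w, hwA, hwW⟩)
  calc infDist z (A ∩ W) ≤ dist z w := infDist_le_dist_of_mem ⟨hwA, hwW⟩
    _ ≤ dist z u := by linarith [dist_nonneg (x := w) (y := u)]
    _ = infDist z A := hu.symm

theorem infDist_inter_lt (hA : IsClosed A) (hAne : A.Nonempty) (hW : IsClosed W)
    (hAW : A ∪ W = univ) (hE : IsClosed E) (hEne : E.Nonempty) (hEW : E ⊆ W)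
    (hAE : Disjoint A E) (hz : infDist z A < infDist z E) : infDist z (A ∩ W) < infDist z E := by
  by_cases hzW : z ∈ W
  · rwa [hgeo.infDist_inter_eq hA hAne hW hAW hzW]
  have hzA : z ∈ A := (hAW ▸ mem_univ z : z ∈ A ∪ W).resolve_right hzW
  obtain ⟨e, heE, he⟩ := hE.exists_infDist_eq_dist hEne z
  obtain ⟨w, hw, hwe⟩ := hgeo.exists_mem_inter_dist_add_dist_eq hA hW hAW hzA (hEW heE)
  have : 0 < dist w e := dist_pos.mpr fun hwe => disjoint_left.mp hAE hw.1 (hwe ▸ heE)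
  calc infDist z (A ∩ W) ≤ dist z w := infDist_le_dist_of_mem hw
    _ < dist z e := by linarith
    _ = infDist z E := he.symm

end IsGeodesicSpace

namespace IsDominanceChain

variable {M : Type*} [MetricSpace M] {k : ℕ} {P Q : Set M} {U V : ℕ → Set M}
  (h : IsDominanceChain k P Q U V) (hPne : P.Nonempty) (hQne : Q.Nonempty)
include h hPne hQne

theorem mem_left_succ_iff {j : ℕ} (hj : j + 1 < k) {z : M} :
    z ∈ U (j + 1) ↔ infDist z (U j) ≤ infDist z (V (j + 2)) := by
  rw [h.left_succ j hj, mem_dominanceRegion_iff (hPne.mono (h.subset_left _))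
    (hQne.mono (h.subset_right _))]

theorem mem_right_succ_iff {j : ℕ} (hj : j + 1 < k) {z : M} :
    z ∈ V (j + 1) ↔ infDist z (V (j + 2)) ≤ infDist z (U j) := by
  rw [h.right_succ j hj, mem_dominanceRegion_iff (hQne.mono (h.subset_right _))
    (hPne.mono (h.subset_left _))]

variable (hgeo : IsGeodesicSpace M) (hP : IsClosed P) (hQ : IsClosed Q)
include hgeo hP hQ

theorem inter_nonempty (i : ℕ) : (U i ∩ V i).Nonempty := by
  obtain ⟨p, hp⟩ := hPne
  obtain ⟨q, hq⟩ := hQne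
  obtain ⟨w, hw, -⟩ := hgeo.exists_mem_inter_dist_add_dist_eq (h.isClosed_left hP i)
    (h.isClosed_right hQ i) (h.left_union_right i) (h.subset_left i hp) (h.subset_right i hq)
  exact ⟨w, hw⟩

variable [ProperSpace M] {j : ℕ} (hj : j + 1 < k)
include hj

theorem inter_subset_bisect :
    U (j + 1) ∩ V (j + 1) ⊆ bisect (U j ∩ V j) (U (j + 2) ∩ V (j + 2)) := by
  rintro z ⟨hzU, hzV⟩
  change infDist z (U j ∩ V j) = infDist z (U (j + 2) ∩ V (j + 2))
  rw [hgeo.infDist_inter_eq (h.isClosed_left hP j) (hPne.mono (h.subset_left j))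
      (h.isClosed_right hQ j) (h.left_union_right j) (h.antitone j.le_succ hzV), inter_comm,
    hgeo.infDist_inter_eq (h.isClosed_right hQ _) (hQne.mono (h.subset_right _))
      (h.isClosed_left hP _) (union_comm (U _) _ ▸ h.left_union_right _)
      (h.monotone (j + 1).le_succ hzU)]
  exact le_antisymm ((h.mem_left_succ_iff hPne hQne hj).mp hzU)
    ((h.mem_right_succ_iff hPne hQne hj).mp hzV)

theorem bisect_subset_left (hPQ : Disjoint P Q) :
    bisect (U j ∩ V j) (U (j + 2) ∩ V (j + 2)) ⊆ U (j + 1) := by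
  intro z hz
  by_contra hzU
  have hlt : infDist z (V (j + 2)) < infDist z (U j ∩ V j) :=
    (not_le.mp ((h.mem_left_succ_iff hPne hQne hj).not.mp hzU)).trans_le
      (infDist_le_infDist_of_subset inter_subset_left (h.inter_nonempty hPne hQne hgeo hP hQ j))
  have hE := hgeo.infDist_inter_lt (h.isClosed_right hQ _) (hQne.mono (h.subset_right _))
    (h.isClosed_left hP (j + 2)) (union_comm (U _) _ ▸ h.left_union_right _)
    ((h.isClosed_left hP j).inter (h.isClosed_right hQ j))
    (h.inter_nonempty hPne hQne hgeo hP hQ j) (inter_subset_left.trans (h.monotone (by omega)))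
    ((h.disjoint_left_right_succ hP hQ hPQ (by omega)).mono inter_subset_left
      (h.antitone (j + 1).le_succ)).symm hlt
  rw [inter_comm] at hE
  exact hE.ne' hz

theorem bisect_subset_right (hPQ : Disjoint P Q) :
    bisect (U j ∩ V j) (U (j + 2) ∩ V (j + 2)) ⊆ V (j + 1) := by
  intro z hz
  by_contra hzV
  have hlt : infDist z (U j) < infDist z (U (j + 2) ∩ V (j + 2)) :=
    (not_le.mp ((h.mem_right_succ_iff hPne hQne hj).not.mp hzV)).trans_le
      (infDist_le_infDist_of_subset inter_subset_right
        (h.inter_nonempty hPne hQne hgeo hP hQ (j + 2)))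
  have hE := hgeo.infDist_inter_lt (h.isClosed_left hP j) (hPne.mono (h.subset_left _))
    (h.isClosed_right hQ j) (h.left_union_right j)
    ((h.isClosed_left hP _).inter (h.isClosed_right hQ _))
    (h.inter_nonempty hPne hQne hgeo hP hQ _) (inter_subset_right.trans (h.antitone (by omega)))
    ((h.disjoint_left_right_succ hP hQ hPQ (by omega)).mono le_rfl
      (inter_subset_right.trans (h.antitone (j + 1).le_succ))) hlt
  exact hE.ne hz

theorem inter_eq_bisect (hPQ : Disjoint P Q) :
    U (j + 1) ∩ V (j + 1) = bisect (U j ∩ V j) (U (j + 2) ∩ V (j + 2)) :=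
  (h.inter_subset_bisect hPne hQne hgeo hP hQ hj).antisymm
    (subset_inter (h.bisect_subset_left hPne hQne hgeo hP hQ hj hPQ)
      (h.bisect_subset_right hPne hQne hgeo hP hQ hj hPQ))

end IsDominanceChain

/-- Main theorem: existence of distance `k`-sectors in proper geodesic metric spaces. -/
theorem ksector_exists {M : Type*} [MetricSpace M] [ProperSpace M]
    (hgeo : IsGeodesicSpace M) (k : ℕ) (hk : 2 ≤ k)
    (P Q : Set M) (hPne : P.Nonempty) (hQne : Q.Nonempty)
    (hPcl : IsClosed P) (hQcl : IsClosed Q) (hPQ : Disjoint P Q) :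
    ∃ C : ℕ → Set M, C 0 = P ∧ C k = Q ∧
      ∀ i, 0 < i → i < k →
        (C i).Nonempty ∧ C i = bisect (C (i - 1)) (C (i + 1)) := by
  obtain ⟨U, V, h⟩ := exists_isDominanceChain (k := k) (by omega) P Q
  refine ⟨fun i => U i ∩ V i, by simp only [h.left_zero, h.right_zero, inter_univ],
    by simp only [h.left_of_le k le_rfl, h.right_of_le k le_rfl, univ_inter], fun i hi hik => ?_⟩
  obtain ⟨j, rfl⟩ : ∃ j, i = j + 1 := ⟨i - 1, by omega⟩
  exact ⟨h.inter_nonempty hPne hQne hgeo hPcl hQcl _,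
    h.inter_eq_bisect hPne hQne hgeo hPcl hQcl hik hPQ⟩
end

section
/- Let (M, dist) be an arbitrary metric space, let k ≥ 2 be an integer, and let P and Q be nonempty subsets of M. Then there exists at least one k-gradation between P and Q, i.e., a (k−1)-tuple (R_1, S_1), …, (R_{k−1}, S_{k−1}) of pairs of subsets of M such that R_i = dom(R_{i−1}, S_{i+1}) and S_i = dom(S_{i+1}, R_{i−1}) for every i = 1, …, k−1, where R_0 = P and S_k = Q. -/
/-!
The defining equations say that `(R, S)` is a fixed point of a map on pairs of sequences of sets
which is monotone when the `R`-sequence is ordered by inclusion and the `S`-sequence by reverse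
inclusion, since `dom(X, Y)` grows with `X` and shrinks with `Y`. Knaster–Tarski then provides a
fixed point. The only obstruction is the empty set, whose `infDist` is the junk value `0` and
which breaks this monotonicity; it is removed by always adjoining `P` to the first and `Q` to the second
argument of `dom`, which changes nothing at a fixed point because `X ⊆ dom(X, Y)`.
-/

open Metric Set

/-- The dominance region of `X` over `Y`: points at least as close to `X` as to `Y`. -/
def domReg {M : Type*} [MetricSpace M] (X Y : Set M) : Set M :=
  {z | infDist z X ≤ infDist z Y}

section Gradation

variable {M : Type*} [MetricSpace M]

lemma subset_domReg (X Y : Set M) : X ⊆ domReg X Y := fun _ hz =>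
  (infDist_zero_of_mem hz).trans_le infDist_nonneg

lemma domReg_mono {X X' Y Y' : Set M} (hX : X ⊆ X') (hXne : X.Nonempty) (hY : Y' ⊆ Y)
    (hY'ne : Y'.Nonempty) : domReg X Y ⊆ domReg X' Y' := fun _ hz =>
  (infDist_le_infDist_of_subset hX hXne).trans (hz.trans (infDist_le_infDist_of_subset hY hY'ne))

def gradationStep (k : ℕ) (P Q : Set M) (p : (ℕ → Set M) × (ℕ → Set M)ᵒᵈ) :
    (ℕ → Set M) × (ℕ → Set M)ᵒᵈ :=
  (fun i => if i = 0 then P else domReg (p.1 (i - 1) ∪ P) (OrderDual.ofDual p.2 (i + 1) ∪ Q),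
   OrderDual.toDual fun j =>
    if k ≤ j then Q else domReg (OrderDual.ofDual p.2 (j + 1) ∪ Q) (p.1 (j - 1) ∪ P))

lemma gradationStep_monotone (k : ℕ) {P Q : Set M} (hP : P.Nonempty) (hQ : Q.Nonempty) :
    Monotone (gradationStep k P Q) := by
  rintro ⟨R, S⟩ ⟨R', S'⟩ ⟨hR, hS⟩
  refine ⟨fun i => ?_, fun j => ?_⟩
  · change (if i = 0 then P else _) ⊆ (if i = 0 then P else _)
    split_ifs
    · exact subset_rfl
    · exact domReg_mono (union_subset_union_left P (hR _)) hP.inr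
        (union_subset_union_left Q (hS _)) hQ.inr
  · change (if k ≤ j then Q else _) ⊆ (if k ≤ j then Q else _)
    split_ifs
    · exact subset_rfl
    · exact domReg_mono (union_subset_union_left Q (hS _)) hQ.inr
        (union_subset_union_left P (hR _)) hP.inr

variable {k : ℕ} {P Q : Set M} {R S : ℕ → Set M}

lemma gradationStep_fixed_iff :
    gradationStep k P Q (R, OrderDual.toDual S) = (R, OrderDual.toDual S) ↔
      (∀ i, (if i = 0 then P else domReg (R (i - 1) ∪ P) (S (i + 1) ∪ Q)) = R i) ∧
      ∀ j, (if k ≤ j then Q else domReg (S (j + 1) ∪ Q) (R (j - 1) ∪ P)) = S j := by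
  simp only [gradationStep, Prod.mk.injEq, OrderDual.ofDual_toDual, OrderDual.toDual_inj,
    funext_iff]

theorem exists_fixed_gradationStep (k : ℕ) {P Q : Set M} (hP : P.Nonempty)
    (hQ : Q.Nonempty) : ∃ R S : ℕ → Set M,
      gradationStep k P Q (R, OrderDual.toDual S) = (R, OrderDual.toDual S) :=
  let F : _ →o _ := ⟨gradationStep k P Q, gradationStep_monotone k hP hQ⟩
  ⟨(OrderHom.lfp F).1, OrderDual.ofDual (OrderHom.lfp F).2, F.map_lfp⟩

lemma isGradation_of_fixed
    (hfix : gradationStep k P Q (R, OrderDual.toDual S) = (R, OrderDual.toDual S)) :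
    R 0 = P ∧ S k = Q ∧ ∀ i, 0 < i → i < k →
      R i = domReg (R (i - 1)) (S (i + 1)) ∧ S i = domReg (S (i + 1)) (R (i - 1)) := by
  obtain ⟨hR, hS⟩ := gradationStep_fixed_iff.mp hfix
  have hPR : ∀ i, P ⊆ R i := fun i => by
    rw [← hR i]
    split_ifs
    · exact subset_rfl
    · exact subset_union_right.trans (subset_domReg _ _)
  have hQS : ∀ j, Q ⊆ S j := fun j => by
    rw [← hS j]
    split_ifs
    · exact subset_rfl
    · exact subset_union_right.trans (subset_domReg _ _)
  refine ⟨by simpa using (hR 0).symm, by simpa using (hS k).symm, fun i hi hik => ⟨?_, ?_⟩⟩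
  · rw [← hR i, if_neg hi.ne', union_eq_left.mpr (hPR _), union_eq_left.mpr (hQS _)]
  · rw [← hS i, if_neg hik.not_ge, union_eq_left.mpr (hPR _), union_eq_left.mpr (hQS _)]

end Gradation

theorem kgradation_exists_general {M : Type*} [MetricSpace M] (k : ℕ)
    (P Q : Set M) (hPne : P.Nonempty) (hQne : Q.Nonempty) :
    ∃ R S : ℕ → Set M, R 0 = P ∧ S k = Q ∧
      ∀ i, 0 < i → i < k →
        R i = domReg (R (i - 1)) (S (i + 1)) ∧
        S i = domReg (S (i + 1)) (R (i - 1)) := by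
  obtain ⟨R, S, hfix⟩ := exists_fixed_gradationStep k hPne hQne
  exact ⟨R, S, isGradation_of_fixed hfix⟩

/-- Existence of `k`-gradations in an arbitrary metric space. -/
theorem kgradation_exists {M : Type*} [MetricSpace M] (k : ℕ) (hk : 2 ≤ k)
    (P Q : Set M) (hPne : P.Nonempty) (hQne : Q.Nonempty) :
    ∃ R S : ℕ → Set M, R 0 = P ∧ S k = Q ∧
      ∀ i, 0 < i → i < k →
        R i = domReg (R (i - 1)) (S (i + 1)) ∧
        S i = domReg (S (i + 1)) (R (i - 1)) :=
  kgradation_exists_general k P Q hPne hQne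
end

section
/- Let P and Q be nonempty, disjoint, closed sets in a proper geodesic metric space M, let k ≥ 2 be an integer, and let (R_i, S_i)_{i=1}^{k−1} be a k-gradation between P and Q. Define C_i = R_i ∩ S_i for each i = 1, …, k−1. Then each C_i is nonempty and (C_1, …, C_{k−1}) is a k-sector of P and Q, i.e., C_i = bisect(C_{i−1}, C_{i+1}) for every i = 1, …, k−1, where C_0 = P and C_k = Q. -/
/-!
Since `R i` and `S i` are closed and cover `M`, in a proper geodesic space the distance to
`C i = R i ∩ S i` is `max (infDist · (R i)) (infDist · (S i))`: a nearest point of `R i` seen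
from outside `R i` is a limit of points of a segment avoiding `R i`, hence lies in `S i`.
The `R i` increase and the `S i` decrease, and `R i ∩ S (i + 1)` is empty, as its points
would lie in both `P` and `Q`. With `a = infDist z (R (i - 1))` and `b = infDist z (S (i + 1))`
it follows that `infDist z (C (i - 1))` is either `a` or strictly between `a` and `b`, and
symmetrically for `C (i + 1)`; so `z` is equidistant from `C (i - 1)` and `C (i + 1)` exactly
when `a = b`, that is, when `z ∈ R i ∩ S i`. Finally `C i` is nonempty because `M` is connected.
-/

open Metric Set

section Geodesic

variable {M : Type*} [MetricSpace M]

theorem continuousOn_of_forall_dist_eq {s : Set ℝ} {γ : ℝ → M}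
    (hγ : ∀ x ∈ s, ∀ y ∈ s, dist (γ x) (γ y) = |x - y|) : ContinuousOn γ s :=
  (LipschitzOnWith.mk_one fun x hx y hy => by rw [hγ x hx y hy, Real.dist_eq]).continuousOn

theorem IsGeodesicSpace.isPreconnected_univ (hgeo : IsGeodesicSpace M) :
    IsPreconnected (univ : Set M) := by
  refine isPreconnected_of_forall_pair fun x _ y _ => ?_
  rcases eq_or_ne x y with rfl | hxy
  · exact ⟨{x}, subset_univ _, rfl, rfl, isPreconnected_singleton⟩
  obtain ⟨a, b, γ, hab, rfl, rfl, hγ⟩ := hgeo x y hxy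
  exact ⟨γ '' Icc a b, subset_univ _, mem_image_of_mem γ (left_mem_Icc.2 hab),
    mem_image_of_mem γ (right_mem_Icc.2 hab),
    isPreconnected_Icc.image γ (continuousOn_of_forall_dist_eq hγ)⟩

theorem IsGeodesicSpace.mem_closure_compl_of_dist_eq_infDist (hgeo : IsGeodesicSpace M)
    {A : Set M} {z q : M} (hz : z ∉ A) (hq : q ∈ A) (hzq : dist z q = infDist z A) :
    q ∈ closure Aᶜ := by
  obtain ⟨a, b, γ, hab, rfl, rfl, hγ⟩ := hgeo z q (ne_of_mem_of_not_mem hq hz).symm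
  have hab' : a < b := hab.lt_of_ne (by rintro rfl; exact hz hq)
  have hdist : ∀ t ∈ Icc a b, dist (γ a) (γ t) = t - a := fun t ht => by
    rw [hγ a (left_mem_Icc.2 hab) t ht, abs_of_nonpos (by linarith [ht.1]), neg_sub]
  have himage : γ '' Ico a b ⊆ Aᶜ := by
    rintro _ ⟨t, ht, rfl⟩ hA
    have := infDist_le_dist_of_mem (x := γ a) hA
    rw [hdist t (Ico_subset_Icc_self ht), ← hzq, hdist b (right_mem_Icc.2 hab)] at this
    linarith [ht.2]
  refine closure_mono himage (ContinuousWithinAt.mem_closure_image ?_ ?_)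
  · exact (continuousOn_of_forall_dist_eq hγ b (right_mem_Icc.2 hab)).mono Ico_subset_Icc_self
  · rw [closure_Ico hab'.ne]
    exact right_mem_Icc.2 hab

variable [ProperSpace M]

theorem IsGeodesicSpace.infDist_inter_eq_of_mem (hgeo : IsGeodesicSpace M) {A B : Set M}
    (hA : IsClosed A) (hAne : A.Nonempty) (hB : IsClosed B) (hAB : Aᶜ ⊆ B) {z : M}
    (hz : z ∈ B) : infDist z (A ∩ B) = infDist z A := by
  by_cases hzA : z ∈ A
  · rw [infDist_zero_of_mem hzA, infDist_zero_of_mem (mem_inter hzA hz)]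
  obtain ⟨p, hpA, hp⟩ := hA.exists_infDist_eq_dist hAne z
  have hpB : p ∈ B := hB.closure_subset <|
    closure_mono hAB (hgeo.mem_closure_compl_of_dist_eq_infDist hzA hpA hp.symm)
  have hpAB : p ∈ A ∩ B := ⟨hpA, hpB⟩
  exact le_antisymm (hp ▸ infDist_le_dist_of_mem hpAB)
    (infDist_le_infDist_of_subset inter_subset_left ⟨p, hpAB⟩)

theorem IsGeodesicSpace.infDist_inter_eq_max (hgeo : IsGeodesicSpace M) {A B : Set M}
    (hA : IsClosed A) (hAne : A.Nonempty) (hB : IsClosed B) (hBne : B.Nonempty)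
    (hAB : A ∪ B = univ) (z : M) :
    infDist z (A ∩ B) = max (infDist z A) (infDist z B) := by
  rcases (hAB ▸ mem_univ z : z ∈ A ∪ B) with hz | hz
  · rw [inter_comm, hgeo.infDist_inter_eq_of_mem hB hBne hA
      (compl_subset_iff_union.2 (union_comm A B ▸ hAB)) hz, infDist_zero_of_mem hz,
      max_eq_right infDist_nonneg]
  · rw [hgeo.infDist_inter_eq_of_mem hA hAne hB (compl_subset_iff_union.2 hAB) hz,
      infDist_zero_of_mem hz, max_eq_left infDist_nonneg]

end Geodesic

theorem isClosed_domReg {M : Type*} [MetricSpace M] (X Y : Set M) : IsClosed (domReg X Y) :=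
  isClosed_le (continuous_infDist_pt X) (continuous_infDist_pt Y)

structure IsGradation {M : Type*} [MetricSpace M] (k : ℕ) (P Q : Set M) (R S : ℕ → Set M) :
    Prop where
  R_zero : R 0 = P
  S_self : S k = Q
  R_eq : ∀ i, 0 < i → i < k → R i = domReg (R (i - 1)) (S (i + 1))
  S_eq : ∀ i, 0 < i → i < k → S i = domReg (S (i + 1)) (R (i - 1))

def gradationSector {M : Type*} (k : ℕ) (P Q : Set M) (R S : ℕ → Set M) (i : ℕ) : Set M :=
  if i = 0 then P else if i = k then Q else R i ∩ S i

section Sector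

variable {M : Type*} {k : ℕ} {P Q : Set M} {R S : ℕ → Set M}

theorem gradationSector_zero : gradationSector k P Q R S 0 = P := if_pos rfl

theorem gradationSector_self (hk : k ≠ 0) : gradationSector k P Q R S k = Q := by
  simp [gradationSector, hk]

theorem gradationSector_of_pos_of_lt {i : ℕ} (hi : 0 < i) (hik : i < k) :
    gradationSector k P Q R S i = R i ∩ S i := by
  simp [gradationSector, hi.ne', hik.ne]

theorem gradationSector_reverse (hk : k ≠ 0) {i : ℕ} (hik : i ≤ k) :
    gradationSector k Q P (fun j => S (k - j)) (fun j => R (k - j)) i =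
      gradationSector k P Q R S (k - i) := by
  simp only [gradationSector]
  split_ifs <;> first | omega | simp_all [inter_comm]

end Sector

namespace IsGradation

variable {M : Type*} [MetricSpace M] {k : ℕ} {P Q : Set M} {R S : ℕ → Set M}

theorem reverse (h : IsGradation k P Q R S) :
    IsGradation k Q P (fun i => S (k - i)) (fun i => R (k - i)) where
  R_zero := by simpa using h.S_self
  S_self := by simpa using h.R_zero
  R_eq i hi hik := by
    have := h.S_eq (k - i) (by omega) (by omega)
    rwa [show k - i + 1 = k - (i - 1) by omega, show k - i - 1 = k - (i + 1) by omega] at this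
  S_eq i hi hik := by
    have := h.R_eq (k - i) (by omega) (by omega)
    rwa [show k - i + 1 = k - (i - 1) by omega, show k - i - 1 = k - (i + 1) by omega] at this

theorem mem_R_succ_iff (h : IsGradation k P Q R S) {i : ℕ} (hi : i + 1 < k) {z : M} :
    z ∈ R (i + 1) ↔ infDist z (R i) ≤ infDist z (S (i + 2)) := by
  rw [h.R_eq (i + 1) i.succ_pos hi]
  rfl

theorem isClosed_R (h : IsGradation k P Q R S) (hP : IsClosed P) {i : ℕ} (hi : i < k) :
    IsClosed (R i) := by
  rcases Nat.eq_zero_or_pos i with rfl | hi0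
  · rwa [h.R_zero]
  · rw [h.R_eq i hi0 hi]
    exact isClosed_domReg _ _

theorem isClosed_S (h : IsGradation k P Q R S) (hQ : IsClosed Q) {i : ℕ} (hi : 0 < i)
    (hik : i ≤ k) : IsClosed (S i) := by
  simpa [Nat.sub_sub_self hik] using h.reverse.isClosed_R hQ (i := k - i) (by omega)

theorem R_mono (h : IsGradation k P Q R S) {i j : ℕ} (hij : i ≤ j) (hj : j < k) :
    R i ⊆ R j := by
  induction j, hij using Nat.le_induction with
  | base => exact subset_rfl
  | succ n _ ih =>
    refine (ih (by omega)).trans fun z hz => (h.mem_R_succ_iff hj).2 ?_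
    rw [infDist_zero_of_mem hz]
    exact infDist_nonneg

theorem S_anti (h : IsGradation k P Q R S) {i j : ℕ} (hi : 0 < i) (hij : i ≤ j) (hj : j ≤ k) :
    S j ⊆ S i := by
  simpa [Nat.sub_sub_self hj, Nat.sub_sub_self (hij.trans hj)] using
    h.reverse.R_mono (i := k - j) (j := k - i) (by omega) (by omega)

theorem R_nonempty (h : IsGradation k P Q R S) (hPne : P.Nonempty) {i : ℕ} (hi : i < k) :
    (R i).Nonempty := by
  rw [← h.R_zero] at hPne
  exact hPne.mono (h.R_mono i.zero_le hi)

theorem S_nonempty (h : IsGradation k P Q R S) (hQne : Q.Nonempty) {i : ℕ} (hi : 0 < i)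
    (hik : i ≤ k) : (S i).Nonempty := by
  rw [← h.S_self] at hQne
  exact hQne.mono (h.S_anti hi hik le_rfl)

theorem union_eq_univ (h : IsGradation k P Q R S) {i : ℕ} (hi : 0 < i) (hik : i < k) :
    R i ∪ S i = univ :=
  eq_univ_of_forall fun z => by
    rw [h.R_eq i hi hik, h.S_eq i hi hik]
    exact le_total (infDist z (R (i - 1))) (infDist z (S (i + 1)))

theorem mem_R_of_mem_R_succ_of_mem_S (h : IsGradation k P Q R S) (hP : IsClosed P)
    (hPne : P.Nonempty) {i : ℕ} (hi : i + 1 < k) {z : M} (hR : z ∈ R (i + 1))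
    (hS : z ∈ S (i + 2)) : z ∈ R i := by
  have := (h.mem_R_succ_iff hi).1 hR
  rw [infDist_zero_of_mem hS] at this
  exact ((h.isClosed_R hP (by omega)).mem_iff_infDist_zero (h.R_nonempty hPne (by omega))).2
    (this.antisymm infDist_nonneg)

theorem inter_S_succ_subset (h : IsGradation k P Q R S) (hP : IsClosed P) (hPne : P.Nonempty)
    {i : ℕ} (hi : i < k) : R i ∩ S (i + 1) ⊆ P := by
  induction i with
  | zero => rw [h.R_zero]; exact inter_subset_left
  | succ n ih =>
    exact fun z ⟨hR, hS⟩ => ih (by omega)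
      ⟨h.mem_R_of_mem_R_succ_of_mem_S hP hPne hi hR hS, h.S_anti (by omega) (by omega) hi hS⟩

theorem disjoint_R_S_succ (h : IsGradation k P Q R S) (hP : IsClosed P) (hPne : P.Nonempty)
    (hQ : IsClosed Q) (hQne : Q.Nonempty) (hPQ : Disjoint P Q) {i : ℕ} (hi : i < k) :
    Disjoint (R i) (S (i + 1)) := by
  have hsubQ : R i ∩ S (i + 1) ⊆ Q := by
    have := h.reverse.inter_S_succ_subset hQ hQne (i := k - (i + 1)) (by omega)
    simpa [show k - (k - (i + 1)) = i + 1 by omega, show k - (k - (i + 1) + 1) = i by omega,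
      inter_comm] using this
  exact Set.disjoint_iff.2 fun z hz =>
    disjoint_left.1 hPQ (h.inter_S_succ_subset hP hPne hi hz) (hsubQ hz)

theorem inter_nonempty (h : IsGradation k P Q R S) (hgeo : IsGeodesicSpace M)
    (hP : IsClosed P) (hPne : P.Nonempty) (hQ : IsClosed Q) (hQne : Q.Nonempty) {i : ℕ}
    (hi : 0 < i) (hik : i < k) : (R i ∩ S i).Nonempty := by
  simpa using isPreconnected_closed_iff.1 hgeo.isPreconnected_univ (R i) (S i)
    (h.isClosed_R hP hik) (h.isClosed_S hQ hi hik.le) (h.union_eq_univ hi hik).ge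
    (by simpa using h.R_nonempty hPne hik) (by simpa using h.S_nonempty hQne hi hik.le)

variable [ProperSpace M]

/-- A nearest point of `S (j + 2)` that were also a nearest point of `S j`, seen from outside
`S j`, would lie in the closure of `(S j)ᶜ ⊆ R j`, but `R j` and `S (j + 2)` are disjoint. -/
theorem infDist_S_lt (h : IsGradation k P Q R S) (hgeo : IsGeodesicSpace M) (hP : IsClosed P)
    (hPne : P.Nonempty) (hQ : IsClosed Q) (hQne : Q.Nonempty) (hPQ : Disjoint P Q) {j : ℕ}
    (hj : 0 < j) (hjk : j + 2 ≤ k) {z : M} (hz : z ∉ S j) :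
    infDist z (S j) < infDist z (S (j + 2)) := by
  have hsub : S (j + 2) ⊆ S j := h.S_anti hj (by omega) hjk
  have hne : (S (j + 2)).Nonempty := h.S_nonempty hQne (by omega) hjk
  refine (infDist_le_infDist_of_subset hsub hne).lt_of_ne fun heq => ?_
  obtain ⟨q, hq, hzq⟩ := (h.isClosed_S hQ (by omega) hjk).exists_infDist_eq_dist hne z
  have hcompl : (S j)ᶜ ⊆ R j :=
    compl_subset_iff_union.2 (union_comm (R j) (S j) ▸ h.union_eq_univ hj (by omega))
  have hqR : q ∈ R j := (h.isClosed_R hP (by omega)).closure_subset <| closure_mono hcompl <|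
    hgeo.mem_closure_compl_of_dist_eq_infDist hz (hsub hq) (hzq.symm.trans heq.symm)
  exact disjoint_left.1 (h.disjoint_R_S_succ hP hPne hQ hQne hPQ (i := j + 1) (by omega))
    (h.R_mono (by omega) (by omega) hqR) hq

theorem infDist_gradationSector_eq_or_lt (h : IsGradation k P Q R S) (hgeo : IsGeodesicSpace M)
    (hP : IsClosed P) (hPne : P.Nonempty) (hQ : IsClosed Q) (hQne : Q.Nonempty)
    (hPQ : Disjoint P Q) {j : ℕ} (hjk : j + 2 ≤ k) (z : M) :
    infDist z (gradationSector k P Q R S j) = infDist z (R j) ∨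
      infDist z (R j) < infDist z (gradationSector k P Q R S j) ∧
        infDist z (gradationSector k P Q R S j) < infDist z (S (j + 2)) := by
  rcases Nat.eq_zero_or_pos j with rfl | hj
  · left
    rw [gradationSector_zero, h.R_zero]
  rw [gradationSector_of_pos_of_lt hj (by omega), hgeo.infDist_inter_eq_max
    (h.isClosed_R hP (by omega)) (h.R_nonempty hPne (by omega)) (h.isClosed_S hQ hj (by omega))
    (h.S_nonempty hQne hj (by omega)) (h.union_eq_univ hj (by omega))]
  rcases le_or_gt (infDist z (S j)) (infDist z (R j)) with hle | hlt
  · exact .inl (max_eq_left hle)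
  · right
    rw [max_eq_right hlt.le]
    refine ⟨hlt, h.infDist_S_lt hgeo hP hPne hQ hQne hPQ hj hjk fun hz => ?_⟩
    rw [infDist_zero_of_mem hz] at hlt
    exact infDist_nonneg.not_gt hlt

theorem infDist_gradationSector_add_two_eq_or_lt (h : IsGradation k P Q R S)
    (hgeo : IsGeodesicSpace M) (hP : IsClosed P) (hPne : P.Nonempty) (hQ : IsClosed Q)
    (hQne : Q.Nonempty) (hPQ : Disjoint P Q) {j : ℕ} (hjk : j + 2 ≤ k) (z : M) :
    infDist z (gradationSector k P Q R S (j + 2)) = infDist z (S (j + 2)) ∨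
      infDist z (S (j + 2)) < infDist z (gradationSector k P Q R S (j + 2)) ∧
        infDist z (gradationSector k P Q R S (j + 2)) < infDist z (R j) := by
  have := h.reverse.infDist_gradationSector_eq_or_lt hgeo hQ hQne hP hPne hPQ.symm
    (j := k - (j + 2)) (by omega) z
  rwa [gradationSector_reverse (by omega) (by omega), show k - (k - (j + 2)) = j + 2 by omega,
    show k - (k - (j + 2) + 2) = j by omega] at this

theorem gradationSector_succ_eq_bisect (h : IsGradation k P Q R S) (hgeo : IsGeodesicSpace M)
    (hP : IsClosed P) (hPne : P.Nonempty) (hQ : IsClosed Q) (hQne : Q.Nonempty)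
    (hPQ : Disjoint P Q) {j : ℕ} (hjk : j + 2 ≤ k) :
    gradationSector k P Q R S (j + 1) =
      bisect (gradationSector k P Q R S j) (gradationSector k P Q R S (j + 2)) := by
  ext z
  rw [gradationSector_of_pos_of_lt j.succ_pos (by omega), h.R_eq (j + 1) j.succ_pos (by omega),
    h.S_eq (j + 1) j.succ_pos (by omega)]
  simp only [mem_inter_iff, domReg, bisect, mem_ofPred_eq, Nat.add_sub_cancel, ← le_antisymm_iff]
  rcases h.infDist_gradationSector_eq_or_lt hgeo hP hPne hQ hQne hPQ hjk z with hc | hc <;>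
  rcases h.infDist_gradationSector_add_two_eq_or_lt hgeo hP hPne hQ hQne hPQ hjk z with hd | hd <;>
  constructor <;> intro H <;> linarith

end IsGradation

/-- A `k`-gradation between `P` and `Q` yields a `k`-sector via `C i = R i ∩ S i`. -/
theorem kgradation_gives_ksector {M : Type*} [MetricSpace M] [ProperSpace M]
    (hgeo : IsGeodesicSpace M) (k : ℕ) (hk : 2 ≤ k)
    (P Q : Set M) (hPne : P.Nonempty) (hQne : Q.Nonempty)
    (hPcl : IsClosed P) (hQcl : IsClosed Q) (hPQ : Disjoint P Q)
    (R S : ℕ → Set M) (hR0 : R 0 = P) (hSk : S k = Q)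
    (hgrad : ∀ i, 0 < i → i < k →
      R i = domReg (R (i - 1)) (S (i + 1)) ∧
      S i = domReg (S (i + 1)) (R (i - 1))) :
    ∃ C : ℕ → Set M, C 0 = P ∧ C k = Q ∧
      (∀ i, 0 < i → i < k → C i = R i ∩ S i) ∧
      ∀ i, 0 < i → i < k →
        (C i).Nonempty ∧ C i = bisect (C (i - 1)) (C (i + 1)) := by
  have h : IsGradation k P Q R S :=
    ⟨hR0, hSk, fun i hi hik => (hgrad i hi hik).1, fun i hi hik => (hgrad i hi hik).2⟩
  refine ⟨gradationSector k P Q R S, gradationSector_zero, gradationSector_self (by omega),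
    fun i hi hik => gradationSector_of_pos_of_lt hi hik, fun i hi hik => ⟨?_, ?_⟩⟩
  · rw [gradationSector_of_pos_of_lt hi hik]
    exact h.inter_nonempty hgeo hPcl hPne hQcl hQne hi hik
  · obtain ⟨j, rfl⟩ : ∃ j, i = j + 1 := ⟨i - 1, by omega⟩
    exact h.gradationSector_succ_eq_bisect hgeo hPcl hPne hQcl hQne hPQ hik
end

section
/- Let M be a geodesic metric space and let X and Y be nonempty subsets of M. Then the bisector bisect(X, Y) is nonempty. -/
/-! The function `z ↦ infDist z X - infDist z Y` is continuous, `≤ 0` on `X` and `≥ 0` on `Y`;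
a geodesic space is connected, so the intermediate value theorem gives a zero. -/

open Metric Set

theorem isPreconnected_image_Icc_of_dist_eq {M : Type*} [PseudoMetricSpace M] {γ : ℝ → M}
    {a b : ℝ} (hγ : ∀ s ∈ Icc a b, ∀ t ∈ Icc a b, dist (γ s) (γ t) = |s - t|) :
    IsPreconnected (γ '' Icc a b) := by
  have hlip : LipschitzOnWith 1 γ (Icc a b) :=
    LipschitzOnWith.of_dist_le_mul fun s hs t ht => by
      rw [hγ s hs t ht, NNReal.coe_one, one_mul, Real.dist_eq]
  exact isPreconnected_Icc.image γ hlip.continuousOn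

theorem IsGeodesicSpace.preconnectedSpace {M : Type*} [MetricSpace M]
    (hgeo : IsGeodesicSpace M) : PreconnectedSpace M := by
  refine ⟨isPreconnected_of_forall_pair fun x _ y _ => ?_⟩
  by_cases hxy : x = y
  · exact ⟨{x}, subset_univ _, rfl, hxy ▸ rfl, isPreconnected_singleton⟩
  obtain ⟨a, b, γ, hab, rfl, rfl, hγ⟩ := hgeo x y hxy
  exact ⟨γ '' Icc a b, subset_univ _, mem_image_of_mem γ (left_mem_Icc.mpr hab),
    mem_image_of_mem γ (right_mem_Icc.mpr hab), isPreconnected_image_Icc_of_dist_eq hγ⟩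

theorem bisect_nonempty_of_preconnectedSpace {M : Type*} [MetricSpace M] [PreconnectedSpace M]
    {X Y : Set M} (hX : X.Nonempty) (hY : Y.Nonempty) : (bisect X Y).Nonempty := by
  obtain ⟨x, hx⟩ := hX
  obtain ⟨y, hy⟩ := hY
  let f : M → ℝ := fun z => infDist z X - infDist z Y
  have hf : Continuous f := (continuous_infDist_pt X).sub (continuous_infDist_pt Y)
  have hfx : f x ≤ 0 := by simpa [f, infDist_zero_of_mem hx] using infDist_nonneg
  have hfy : 0 ≤ f y := by simpa [f, infDist_zero_of_mem hy] using infDist_nonneg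
  obtain ⟨z, hz⟩ := intermediate_value_univ x y hf ⟨hfx, hfy⟩
  exact ⟨z, sub_eq_zero.mp hz⟩

/-- In a geodesic metric space, the bisector of two nonempty sets is nonempty. -/
theorem bisect_nonempty {M : Type*} [MetricSpace M] (hgeo : IsGeodesicSpace M)
    (X Y : Set M) (hX : X.Nonempty) (hY : Y.Nonempty) :
    (bisect X Y).Nonempty :=
  haveI := hgeo.preconnectedSpace
  bisect_nonempty_of_preconnectedSpace hX hY
end

section
/- Let X, Y, Z be nonempty closed sets in a proper geodesic metric space M, let D = dom(X, Y) and C = bisect(X, Y). If D and Z are disjoint, then dom(D, Z) = dom(C, Z) and dom(Z, D) = dom(Z, C). -/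
/-!
Along a geodesic from a point of `D = dom(X, Y)` to a point outside `D`, the continuous
function `dist(·, X) - dist(·, Y)` changes sign, so the geodesic meets `C = bisect(X, Y)`.
For `w ∉ D` this puts a point of `C` on the segment from `w` to any point of `D`, whence
`dist(w, C) = dist(w, D)`. For `w ∈ D` the segment to a nearest point of `Z` (properness)
meets `C` strictly before its endpoint, since `Z` is disjoint from `D ⊇ C`; whence
`dist(w, C) < dist(w, Z)`. These two facts give both equalities.
-/

open Metric Set

section

variable {M : Type*} [MetricSpace M]

theorem IsGeodesicSpace.exists_intermediate_value (hgeo : IsGeodesicSpace M) {g h : M → ℝ}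
    (hg : Continuous g) (hh : Continuous h) {x y : M} (hx : g x ≤ h x) (hy : h y ≤ g y) :
    ∃ q, g q = h q ∧ dist x q + dist q y = dist x y := by
  rcases eq_or_ne x y with rfl | hxy
  · exact ⟨x, le_antisymm hx hy, by simp⟩
  obtain ⟨a, b, γ, hab, rfl, rfl, hγ⟩ := hgeo x y hxy
  have hγc : ContinuousOn γ (Icc a b) :=
    (LipschitzOnWith.of_dist_le_mul (K := 1) fun s hs t ht => by
      rw [hγ s hs t ht, NNReal.coe_one, one_mul, Real.dist_eq]).continuousOn
  obtain ⟨t, ht, hzero⟩ := intermediate_value_Icc hab ((hg.sub hh).comp_continuousOn hγc)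
    (show (0 : ℝ) ∈ Icc (g (γ a) - h (γ a)) (g (γ b) - h (γ b)) from
      ⟨by linarith, by linarith⟩)
  refine ⟨γ t, sub_eq_zero.1 hzero, ?_⟩
  rw [hγ a (left_mem_Icc.2 hab) t ht, hγ t ht b (right_mem_Icc.2 hab),
    hγ a (left_mem_Icc.2 hab) b (right_mem_Icc.2 hab), abs_of_nonpos (by linarith [ht.1]),
    abs_of_nonpos (by linarith [ht.2]), abs_of_nonpos (by linarith)]
  ring

theorem bisect_subset_domReg (X Y : Set M) : bisect X Y ⊆ domReg X Y :=
  fun _ h => le_of_eq h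

theorem infDist_bisect_lt_infDist [ProperSpace M] (hgeo : IsGeodesicSpace M) {X Y Z : Set M}
    (hZ : Z.Nonempty) (hZcl : IsClosed Z) (hdisj : Disjoint (domReg X Y) Z) {w : M}
    (hw : w ∈ domReg X Y) : infDist w (bisect X Y) < infDist w Z := by
  obtain ⟨z, hz, hwz⟩ := hZcl.exists_infDist_eq_dist hZ w
  have hzD : z ∉ domReg X Y := disjoint_right.1 hdisj hz
  obtain ⟨q, hq, hdist⟩ := hgeo.exists_intermediate_value (continuous_infDist_pt X)
    (continuous_infDist_pt Y) hw (not_le.1 hzD).le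
  have hqz : 0 < dist q z := dist_pos.2 fun h => hzD (h ▸ bisect_subset_domReg X Y hq)
  calc infDist w (bisect X Y) ≤ dist w q := infDist_le_dist_of_mem hq
    _ < dist w z := by linarith
    _ = infDist w Z := hwz.symm

theorem infDist_bisect_eq_infDist_domReg (hgeo : IsGeodesicSpace M) {X Y : Set M} {w : M}
    (hw : w ∉ domReg X Y) : infDist w (bisect X Y) = infDist w (domReg X Y) := by
  have hcross : ∀ p ∈ domReg X Y, ∃ q ∈ bisect X Y, dist w q ≤ dist w p := by
    intro p hp
    obtain ⟨q, hq, hdist⟩ := hgeo.exists_intermediate_value (continuous_infDist_pt X)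
      (continuous_infDist_pt Y) hp (not_le.1 hw).le
    exact ⟨q, hq, by rw [dist_comm w q, dist_comm w p]; linarith [dist_nonneg (x := p) (y := q)]⟩
  rcases (domReg X Y).eq_empty_or_nonempty with hD | ⟨p, hp⟩
  · rw [hD, subset_empty_iff.1 ((bisect_subset_domReg X Y).trans hD.subset)]
  obtain ⟨c, hc, -⟩ := hcross p hp
  refine le_antisymm ((le_infDist ⟨p, hp⟩).2 fun p' hp' => ?_)
    (infDist_le_infDist_of_subset (bisect_subset_domReg X Y) ⟨c, hc⟩)
  obtain ⟨q, hq, hle⟩ := hcross p' hp'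
  exact (infDist_le_dist_of_mem hq).trans hle

theorem domReg_eq_domReg_of_infDist {D C Z : Set M}
    (hin : ∀ w ∈ D, infDist w C < infDist w Z) (hout : ∀ w ∉ D, infDist w C = infDist w D) :
    domReg D Z = domReg C Z ∧ domReg Z D = domReg Z C := by
  constructor <;> ext w <;> by_cases hw : w ∈ D
  · simp only [domReg, mem_ofPred_eq, infDist_zero_of_mem hw, infDist_nonneg, true_iff]
    exact (hin w hw).le
  · simp only [domReg, mem_ofPred_eq, hout w hw]
  · simp only [domReg, mem_ofPred_eq, infDist_zero_of_mem hw]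
    exact iff_of_false (by linarith [hin w hw, infDist_nonneg (x := w) (s := C)])
      (hin w hw).not_ge
  · simp only [domReg, mem_ofPred_eq, hout w hw]

end

theorem dom_of_dom_eq_dom_of_bisect_general {M : Type*} [MetricSpace M] [ProperSpace M]
    (hgeo : IsGeodesicSpace M)
    (X Y Z : Set M) (hZ : Z.Nonempty)
    (hZcl : IsClosed Z)
    (hdisj : Disjoint (domReg X Y) Z) :
    domReg (domReg X Y) Z = domReg (bisect X Y) Z ∧
    domReg Z (domReg X Y) = domReg Z (bisect X Y) :=
  domReg_eq_domReg_of_infDist (fun _ hw => infDist_bisect_lt_infDist hgeo hZ hZcl hdisj hw)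
    (fun _ hw => infDist_bisect_eq_infDist_domReg hgeo hw)

/-- If the dominance region `D = dom(X,Y)` is disjoint from `Z`, then dominance
regions with respect to `D` and with respect to `C = bisect(X,Y)` coincide. -/
theorem dom_of_dom_eq_dom_of_bisect {M : Type*} [MetricSpace M] [ProperSpace M]
    (hgeo : IsGeodesicSpace M)
    (X Y Z : Set M) (hX : X.Nonempty) (hY : Y.Nonempty) (hZ : Z.Nonempty)
    (hXcl : IsClosed X) (hYcl : IsClosed Y) (hZcl : IsClosed Z)
    (hdisj : Disjoint (domReg X Y) Z) :
    domReg (domReg X Y) Z = domReg (bisect X Y) Z ∧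
    domReg Z (domReg X Y) = domReg Z (bisect X Y) :=
  dom_of_dom_eq_dom_of_bisect_general hgeo X Y Z hZ hZcl hdisj
end

section
/- Let X, Y, Z be nonempty closed sets in a proper geodesic metric space M, let D = dom(X, Y) and C = bisect(X, Y), and suppose D and Z are disjoint. Then for every point a ∈ D one has dist(a, Z) > dist(a, C). -/
open Metric Set

/-!
Walk from `a` along a geodesic towards a nearest point `z` of `Z`. The function
`infDist · X - infDist · Y` is `≤ 0` at `a ∈ dom(X, Y)` and `> 0` at `z ∉ dom(X, Y)`, so by the
intermediate value theorem it vanishes at some point `c` of the segment before `z`; then `c` lies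
on the bisector and `dist a c < dist a z = dist(a, Z)`.
-/

section

variable {M : Type*} [MetricSpace M]

theorem IsGeodesicSpace.exists_eq_zero_dist_lt (hgeo : IsGeodesicSpace M) {f : M → ℝ}
    (hf : Continuous f) {a z : M} (ha : f a ≤ 0) (hz : 0 < f z) :
    ∃ c, f c = 0 ∧ dist a c < dist a z := by
  have haz : a ≠ z := by rintro rfl; linarith
  obtain ⟨α, β, γ, hαβ, rfl, rfl, hiso⟩ := hgeo a z haz
  have hγ : ContinuousOn γ (Icc α β) :=
    LipschitzOnWith.continuousOn (K := 1) fun s hs t ht => by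
      simp [edist_dist, hiso s hs t ht, Real.dist_eq]
  obtain ⟨t, ht, hft⟩ := intermediate_value_Icc hαβ (hf.comp_continuousOn hγ) ⟨ha, hz.le⟩
  have htβ : t < β := ht.2.lt_of_ne (by rintro rfl; exact hz.ne' hft)
  refine ⟨γ t, hft, ?_⟩
  have hα : α ∈ Icc α β := left_mem_Icc.2 hαβ
  rw [hiso α hα t ht, hiso α hα β (right_mem_Icc.2 hαβ), abs_sub_comm, abs_sub_comm α β,
    abs_of_nonneg (sub_nonneg.2 ht.1), abs_of_nonneg (sub_nonneg.2 hαβ)]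
  linarith

theorem exists_mem_bisect_dist_lt (hgeo : IsGeodesicSpace M) (X Y : Set M) {a z : M}
    (ha : a ∈ domReg X Y) (hz : z ∉ domReg X Y) :
    ∃ c ∈ bisect X Y, dist a c < dist a z := by
  obtain ⟨c, hc, hdist⟩ := hgeo.exists_eq_zero_dist_lt
    ((continuous_infDist_pt X).sub (continuous_infDist_pt Y))
    (sub_nonpos.2 ha) (sub_pos.2 (not_le.1 hz))
  exact ⟨c, sub_eq_zero.1 hc, hdist⟩

end

theorem dist_to_Z_gt_dist_to_bisect_general {M : Type*} [MetricSpace M] [ProperSpace M]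
    (hgeo : IsGeodesicSpace M)
    (X Y Z : Set M) (hZ : Z.Nonempty)
    (hZcl : IsClosed Z)
    (hdisj : Disjoint (domReg X Y) Z) :
    ∀ a ∈ domReg X Y, infDist a Z > infDist a (bisect X Y) := by
  intro a ha
  obtain ⟨z, hzZ, hz⟩ := hZcl.exists_infDist_eq_dist hZ a
  obtain ⟨c, hc, hac⟩ :=
    exists_mem_bisect_dist_lt hgeo X Y ha fun hzD => disjoint_left.1 hdisj hzD hzZ
  calc infDist a (bisect X Y) ≤ dist a c := infDist_le_dist_of_mem hc
    _ < dist a z := hac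
    _ = infDist a Z := hz.symm

/-- Inside the dominance region `D = dom(X,Y)`, every point is strictly closer to the
bisector `C = bisect(X,Y)` than to a closed set `Z` disjoint from `D`. -/
theorem dist_to_Z_gt_dist_to_bisect {M : Type*} [MetricSpace M] [ProperSpace M]
    (hgeo : IsGeodesicSpace M)
    (X Y Z : Set M) (hX : X.Nonempty) (hY : Y.Nonempty) (hZ : Z.Nonempty)
    (hXcl : IsClosed X) (hYcl : IsClosed Y) (hZcl : IsClosed Z)
    (hdisj : Disjoint (domReg X Y) Z) :
    ∀ a ∈ domReg X Y, infDist a Z > infDist a (bisect X Y) :=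
  dist_to_Z_gt_dist_to_bisect_general hgeo X Y Z hZ hZcl hdisj
end

section
/- Let X and Y be nonempty closed sets in a geodesic metric space M, let D = dom(X, Y) and C = bisect(X, Y). Then for every point a ∉ D one has dist(a, C) = dist(a, D). -/
open Metric Set

/-!
The sign of `f = dist(·, X) - dist(·, Y)` is positive at `a ∉ D` and nonpositive on `D`, so by the
intermediate value theorem along a geodesic from `a` to any `d ∈ D` the function `f` vanishes at a
point `c ∈ C` with `dist(a, c) ≤ dist(a, d)`. Hence `dist(a, C) ≤ dist(a, D)`, and the reverse
inequality holds because `C ⊆ D`.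
-/

section

variable {M : Type*} [MetricSpace M]

lemma IsGeodesicSpace.exists_eq_zero_dist_le (hgeo : IsGeodesicSpace M) {f : M → ℝ}
    (hf : Continuous f) {a d : M} (ha : 0 < f a) (hd : f d ≤ 0) :
    ∃ c, f c = 0 ∧ dist a c ≤ dist a d := by
  have had : a ≠ d := by
    rintro rfl
    exact hd.not_gt ha
  obtain ⟨u, v, γ, huv, rfl, rfl, hiso⟩ := hgeo a d had
  have hγ : ContinuousOn γ (Icc u v) :=
    (LipschitzOnWith.of_dist_le_mul (K := 1) fun s hs t ht => by
      simp [hiso s hs t ht, Real.dist_eq]).continuousOn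
  have hu : u ∈ Icc u v := left_mem_Icc.2 huv
  obtain ⟨t, ht, hft⟩ := intermediate_value_Icc' huv (hf.comp_continuousOn hγ) ⟨hd, ha.le⟩
  refine ⟨γ t, hft, ?_⟩
  rw [hiso u hu t ht, hiso u hu v (right_mem_Icc.2 huv), abs_sub_comm, abs_sub_comm u]
  exact abs_le_abs_of_nonneg (sub_nonneg.2 ht.1) (sub_le_sub_right ht.2 u)

lemma IsGeodesicSpace.infDist_zeroSet_eq (hgeo : IsGeodesicSpace M) {f : M → ℝ}
    (hf : Continuous f) {a : M} (ha : 0 < f a) :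
    infDist a {z | f z = 0} = infDist a {z | f z ≤ 0} := by
  rcases eq_empty_or_nonempty {z | f z ≤ 0} with hD | ⟨d, hd⟩
  · have hC : {z | f z = 0} = ∅ := eq_empty_of_subset_empty fun z hz => hD ▸ hz.le
    rw [hC, hD]
  obtain ⟨c, hc, -⟩ := hgeo.exists_eq_zero_dist_le hf ha hd
  refine le_antisymm ((le_infDist ⟨d, hd⟩).2 fun e he => ?_)
    (infDist_le_infDist_of_subset (fun z hz => le_of_eq hz) ⟨c, hc⟩)
  obtain ⟨c', hc', hc'e⟩ := hgeo.exists_eq_zero_dist_le hf ha he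
  exact (infDist_le_dist_of_mem (s := {z | f z = 0}) hc').trans hc'e

end

theorem dist_to_bisect_eq_dist_to_dom_general {M : Type*} [MetricSpace M]
    (hgeo : IsGeodesicSpace M)
    (X Y : Set M) :
    ∀ a, a ∉ domReg X Y → infDist a (bisect X Y) = infDist a (domReg X Y) := by
  intro a ha
  have hf : Continuous fun z => infDist z X - infDist z Y :=
    continuous_infDist_pt X |>.sub (continuous_infDist_pt Y)
  have hC : bisect X Y = {z | infDist z X - infDist z Y = 0} := by
    simp only [bisect, sub_eq_zero]
  have hD : domReg X Y = {z | infDist z X - infDist z Y ≤ 0} := by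
    simp only [domReg, sub_nonpos]
  rw [hC, hD]
  exact hgeo.infDist_zeroSet_eq hf (sub_pos.2 (not_le.1 ha))

/-- Seen from outside, the dominance region `D = dom(X,Y)` and the bisector
`C = bisect(X,Y)` are at the same distance. -/
theorem dist_to_bisect_eq_dist_to_dom {M : Type*} [MetricSpace M]
    (hgeo : IsGeodesicSpace M)
    (X Y : Set M) (hX : X.Nonempty) (hY : Y.Nonempty)
    (hXcl : IsClosed X) (hYcl : IsClosed Y) :
    ∀ a, a ∉ domReg X Y → infDist a (bisect X Y) = infDist a (domReg X Y) :=
  dist_to_bisect_eq_dist_to_dom_general hgeo X Y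
end

section
/- Let P and Q be nonempty, disjoint, closed sets in an arbitrary metric space M, let k ≥ 2 be an integer, and let (C_1, …, C_{k−1}) be a k-sector of C_0 = P and C_k = Q. Then C_{i−1} and C_{i+1} are disjoint for each i = 1, …, k−1. -/
/-!
A point `z` of `C (i-1) ∩ C (i+1)` lies on `C i`, being at distance `0` from both sets. Once `z`
lies on two consecutive sets `C j` and `C (j+1)`, the bisector equation for `C (j+1)` puts it at
distance `0` from `C (j+2)`, hence on it since that set is closed and nonempty; symmetrically it
lies on `C (j-1)`. So `z` propagates along the whole chain and ends up in both `P` and `Q`.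
-/

open Metric Set

section Bisector

variable {M : Type*} [MetricSpace M] {X Y : Set M} {z : M}

theorem bisect_comm (X Y : Set M) : bisect X Y = bisect Y X :=
  Set.ext fun _ => eq_comm

theorem isClosed_bisect (X Y : Set M) : IsClosed (bisect X Y) :=
  isClosed_eq (continuous_infDist_pt X) (continuous_infDist_pt Y)

theorem mem_bisect_of_mem_of_mem (hX : z ∈ X) (hY : z ∈ Y) : z ∈ bisect X Y := by
  simp only [bisect, mem_ofPred_eq, infDist_zero_of_mem hX, infDist_zero_of_mem hY]

theorem mem_of_mem_bisect_of_mem (hYcl : IsClosed Y) (hYne : Y.Nonempty)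
    (hz : z ∈ bisect X Y) (hX : z ∈ X) : z ∈ Y := by
  rw [hYcl.mem_iff_infDist_zero hYne, ← hz]
  exact infDist_zero_of_mem hX

end Bisector

theorem Nat.forall_le_of_zero_of_self_of_between {k : ℕ} {p : ℕ → Prop} (h₀ : p 0) (hk : p k)
    (hmid : ∀ j, 0 < j → j < k → p j) : ∀ j ≤ k, p j := by
  intro j hj
  rcases j.eq_zero_or_pos with rfl | hpos
  · exact h₀
  rcases hj.eq_or_lt with rfl | hlt
  · exact hk
  · exact hmid j hpos hlt

namespace BisectorChain

variable {M : Type*} [MetricSpace M] {k : ℕ} {C : ℕ → Set M}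
  (hbis : ∀ i, 0 < i → i < k → C i = bisect (C (i - 1)) (C (i + 1)))
  (hcl : ∀ j ≤ k, IsClosed (C j)) (hne : ∀ j ≤ k, (C j).Nonempty)
  {z : M}

include hbis hcl hne

theorem mem_succ_succ {m : ℕ} (hm : m + 2 ≤ k) (h₀ : z ∈ C m) (h₁ : z ∈ C (m + 1)) :
    z ∈ C (m + 2) := by
  rw [hbis (m + 1) (by omega) (by omega)] at h₁
  exact mem_of_mem_bisect_of_mem (hcl _ hm) (hne _ hm) h₁ h₀

theorem mem_of_mem_succ_of_mem_succ_succ {m : ℕ} (hm : m + 2 ≤ k) (h₁ : z ∈ C (m + 1))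
    (h₂ : z ∈ C (m + 2)) : z ∈ C m := by
  rw [hbis (m + 1) (by omega) (by omega), bisect_comm] at h₁
  exact mem_of_mem_bisect_of_mem (hcl _ (by omega)) (hne _ (by omega)) h₁ h₂

theorem mem_of_mem_of_mem_succ {j : ℕ} (hj : j < k) (h₀ : z ∈ C j) (h₁ : z ∈ C (j + 1)) :
    ∀ m ≤ k, z ∈ C m := by
  suffices hpair : ∀ m, m < k → z ∈ C m ∧ z ∈ C (m + 1) by
    intro m hm
    rcases m.eq_zero_or_pos with rfl | hpos
    · exact (hpair 0 (by omega)).1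
    · simpa [Nat.sub_add_cancel hpos] using (hpair (m - 1) (by omega)).2
  intro m hm
  rcases le_total j m with hjm | hmj
  · induction m, hjm using Nat.le_induction with
    | base => exact ⟨h₀, h₁⟩
    | succ m _ ih =>
      obtain ⟨hm₀, hm₁⟩ := ih (by omega)
      exact ⟨hm₁, mem_succ_succ hbis hcl hne (by omega) hm₀ hm₁⟩
  · induction hmj using Nat.decreasingInduction with
    | self => exact ⟨h₀, h₁⟩
    | of_succ m _ ih =>
      obtain ⟨hm₁, hm₂⟩ := ih (by omega)
      exact ⟨mem_of_mem_succ_of_mem_succ_succ hbis hcl hne (by omega) hm₁ hm₂, hm₁⟩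

end BisectorChain

theorem ksector_alternate_disjoint_general {M : Type*} [MetricSpace M] (k : ℕ)
    (P Q : Set M) (hPne : P.Nonempty) (hQne : Q.Nonempty)
    (hPcl : IsClosed P) (hQcl : IsClosed Q) (hPQ : Disjoint P Q)
    (C : ℕ → Set M) (hC0 : C 0 = P) (hCk : C k = Q)
    (hsector : ∀ i, 0 < i → i < k →
      (C i).Nonempty ∧ C i = bisect (C (i - 1)) (C (i + 1))) :
    ∀ i, 0 < i → i < k → Disjoint (C (i - 1)) (C (i + 1)) := by
  intro i hi₀ hik
  have hbis i hi₀ hik := (hsector i hi₀ hik).2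
  have hcl : ∀ j ≤ k, IsClosed (C j) :=
    Nat.forall_le_of_zero_of_self_of_between (hC0 ▸ hPcl) (hCk ▸ hQcl)
      fun j hj₀ hjk => hbis j hj₀ hjk ▸ isClosed_bisect _ _
  have hne : ∀ j ≤ k, (C j).Nonempty :=
    Nat.forall_le_of_zero_of_self_of_between (hC0 ▸ hPne) (hCk ▸ hQne)
      fun j hj₀ hjk => (hsector j hj₀ hjk).1
  refine Set.disjoint_left.2 fun z hzprev hznext => ?_
  have hzi : z ∈ C (i - 1 + 1) := by
    rw [Nat.sub_add_cancel hi₀, hbis i hi₀ hik]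
    exact mem_bisect_of_mem_of_mem hzprev hznext
  have hzall := BisectorChain.mem_of_mem_of_mem_succ hbis hcl hne (by omega) hzprev hzi
  exact Set.disjoint_left.1 hPQ (hC0 ▸ hzall 0 (Nat.zero_le k)) (hCk ▸ hzall k le_rfl)

/-- In a `k`-sector, consecutive-but-one curves `C (i-1)` and `C (i+1)` are disjoint. -/
theorem ksector_alternate_disjoint {M : Type*} [MetricSpace M] (k : ℕ) (hk : 2 ≤ k)
    (P Q : Set M) (hPne : P.Nonempty) (hQne : Q.Nonempty)
    (hPcl : IsClosed P) (hQcl : IsClosed Q) (hPQ : Disjoint P Q)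
    (C : ℕ → Set M) (hC0 : C 0 = P) (hCk : C k = Q)
    (hsector : ∀ i, 0 < i → i < k →
      (C i).Nonempty ∧ C i = bisect (C (i - 1)) (C (i + 1))) :
    ∀ i, 0 < i → i < k → Disjoint (C (i - 1)) (C (i + 1)) :=
  ksector_alternate_disjoint_general k P Q hPne hQne hPcl hQcl hPQ C hC0 hCk hsector
end

section
/- Let M be the three-point metric subspace {−1, 0, 1} of the real line with the induced metric, P = {1} and Q = {−1}. Then there is no 3-sector of P and Q, i.e., there is no pair (C_1, C_2) of nonempty subsets of M with C_1 = bisect(P, C_2) and C_2 = bisect(C_1, Q). -/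
/-!
Let `(C₁, C₂)` be a 3-sector of closed, disjoint, nonempty `P` and `Q`. A point of `C₁ ∩ C₂` would
be at distance `0` from both `P` and `Q`, so `C₁ ∩ C₂ = ∅`. A point of `C₁ ∩ Q` is at distance `0`
from `C₁` and from `Q`, hence lies in `C₂`; a point of `C₁ ∩ P` is at distance `0` from `P`, hence
from `C₂`, and lies in `C₂` because bisectors are closed. By symmetry both sectors avoid `P ∪ Q`,
so a 3-sector needs two points outside `P ∪ Q`, while `{-1, 0, 1}` has only `0`.
-/

open Metric Set

structure IsThreeSector {M : Type*} [MetricSpace M] (P Q C₁ C₂ : Set M) : Prop where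
  nonempty_left : C₁.Nonempty
  nonempty_right : C₂.Nonempty
  eq_bisect_left : C₁ = bisect P C₂
  eq_bisect_right : C₂ = bisect C₁ Q

namespace IsThreeSector

variable {M : Type*} [MetricSpace M] {P Q C₁ C₂ : Set M}

theorem symm (h : IsThreeSector P Q C₁ C₂) : IsThreeSector Q P C₂ C₁ where
  nonempty_left := h.nonempty_right
  nonempty_right := h.nonempty_left
  eq_bisect_left := h.eq_bisect_right.trans (bisect_comm C₁ Q)
  eq_bisect_right := h.eq_bisect_left.trans (bisect_comm P C₂)

theorem disjoint (h : IsThreeSector P Q C₁ C₂) (hP : IsClosed P) (hQ : IsClosed Q)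
    (hPne : P.Nonempty) (hQne : Q.Nonempty) (hPQ : Disjoint P Q) : Disjoint C₁ C₂ := by
  refine Set.disjoint_left.2 fun z hz₁ hz₂ => hPQ.notMem_of_mem_left (a := z) ?_ ?_
  · have hz : z ∈ bisect P C₂ := h.eq_bisect_left ▸ hz₁
    rw [hP.mem_iff_infDist_zero hPne, hz, infDist_zero_of_mem hz₂]
  · have hz : z ∈ bisect C₁ Q := h.eq_bisect_right ▸ hz₂
    rw [hQ.mem_iff_infDist_zero hQne, ← hz, infDist_zero_of_mem hz₁]

theorem disjoint_right_of_disjoint (h : IsThreeSector P Q C₁ C₂) (hC : Disjoint C₁ C₂) :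
    Disjoint C₁ Q :=
  Set.disjoint_left.2 fun _ hz₁ hzQ =>
    hC.ne_of_mem hz₁ (h.eq_bisect_right ▸ mem_bisect_of_mem_of_mem hz₁ hzQ) rfl

theorem disjoint_left_of_disjoint (h : IsThreeSector P Q C₁ C₂) (hC : Disjoint C₁ C₂) :
    Disjoint C₁ P := by
  refine Set.disjoint_left.2 fun z hz₁ hzP => hC.ne_of_mem hz₁ ?_ rfl
  have hC₂ : IsClosed C₂ := h.eq_bisect_right ▸ isClosed_bisect C₁ Q
  have hz : z ∈ bisect P C₂ := h.eq_bisect_left ▸ hz₁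
  rw [hC₂.mem_iff_infDist_zero h.nonempty_right, ← hz, infDist_zero_of_mem hzP]

theorem nontrivial_compl_union (h : IsThreeSector P Q C₁ C₂) (hP : IsClosed P)
    (hQ : IsClosed Q) (hPne : P.Nonempty) (hQne : Q.Nonempty) (hPQ : Disjoint P Q) :
    (P ∪ Q)ᶜ.Nontrivial := by
  have hC := h.disjoint hP hQ hPne hQne hPQ
  have hC₁ : C₁ ⊆ (P ∪ Q)ᶜ := subset_compl_iff_disjoint_right.2 <|
    disjoint_union_right.2 ⟨h.disjoint_left_of_disjoint hC, h.disjoint_right_of_disjoint hC⟩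
  have hC₂ : C₂ ⊆ (P ∪ Q)ᶜ := by
    rw [union_comm]
    exact subset_compl_iff_disjoint_right.2 <| disjoint_union_right.2
      ⟨h.symm.disjoint_left_of_disjoint hC.symm, h.symm.disjoint_right_of_disjoint hC.symm⟩
  obtain ⟨x, hx₁⟩ := h.nonempty_left
  obtain ⟨y, hy₂⟩ := h.nonempty_right
  exact ⟨x, hC₁ hx₁, y, hC₂ hy₂, hC.ne_of_mem hx₁ hy₂⟩

end IsThreeSector

/-- In the three-point subspace `{-1, 0, 1}` of the real line, the sets `P = {1}` and
`Q = {-1}` admit no 3-sector. -/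
theorem no_trisector_three_points :
    ¬ ∃ C₁ C₂ : Set ({-1, 0, 1} : Set ℝ), C₁.Nonempty ∧ C₂.Nonempty ∧
      C₁ = bisect {x : ({-1, 0, 1} : Set ℝ) | (x : ℝ) = 1} C₂ ∧
      C₂ = bisect C₁ {x : ({-1, 0, 1} : Set ℝ) | (x : ℝ) = -1} := by
  rintro ⟨C₁, C₂, hC₁, hC₂, h₁, h₂⟩
  set P : Set ({-1, 0, 1} : Set ℝ) := {x | (x : ℝ) = 1}
  set Q : Set ({-1, 0, 1} : Set ℝ) := {x | (x : ℝ) = -1}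
  have hsector : IsThreeSector P Q C₁ C₂ := ⟨hC₁, hC₂, h₁, h₂⟩
  have hPQ : Disjoint P Q :=
    Set.disjoint_left.2 fun x (h1 : (x : ℝ) = 1) (h2 : (x : ℝ) = -1) => by linarith
  have hzero : ∀ x ∈ (P ∪ Q)ᶜ, (x : ℝ) = 0 := by
    rintro ⟨x, hx⟩ hcompl
    simp only [P, Q, mem_compl_iff, mem_union, mem_ofPred_eq, not_or] at hcompl
    simp only [mem_insert_iff, mem_singleton_iff] at hx
    tauto
  exact (hsector.nontrivial_compl_union (isClosed_eq continuous_subtype_val continuous_const)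
    (isClosed_eq continuous_subtype_val continuous_const) ⟨⟨1, by simp⟩, rfl⟩
    ⟨⟨-1, by simp⟩, rfl⟩ hPQ).not_subsingleton
    fun x hx y hy => Subtype.ext ((hzero x hx).trans (hzero y hy).symm)
end
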